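/- arXiv:1210.0157 — 4 statements merged into one kernel-verified Lean document; each statement's English description precedes it below -/
import Mathlib

section
/- Let Λ ⊆ ℝ be a locally finite point set that is reflection symmetric in two distinct points. Then Λ is uniformly discrete, i.e., there exists r > 0 such that any two distinct points of Λ are at distance at least r. -/
/-!
Composing the reflections in `x` and `y` is the translation by `2 (y - x) ≠ 0`, so `Λ` is
periodic. Every pair of points at distance `< 1` can then be translated by a multiple of the
period into one fixed compact window, where `Λ` is finite; the finitely many differences of
points in the window are bounded away from `0`.
-/

open Set
open scoped Pointwise

theorem vadd_set_eq_self_of_image_sub_eq_self {G : Type*} [AddCommGroup G] {s : Set G} {a b : G}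
    (ha : (a - ·) '' s = s) (hb : (b - ·) '' s = s) : (b - a) +ᵥ s = s := by
  have hcomp : (b - ·) ∘ (a - ·) = ((b - a) +ᵥ ·) := by
    ext w
    simp only [Function.comp_apply, vadd_eq_add]
    abel
  rw [← image_vadd, ← hcomp, image_comp, ha, hb]

theorem Set.Finite.exists_pos_forall_le_dist {X : Type*} [MetricSpace X] {s : Set X}
    (hs : s.Finite) (x : X) : ∃ r > 0, ∀ y ∈ s, y ≠ x → r ≤ dist y x := by
  obtain ⟨r, hr, hball⟩ :=
    Metric.isOpen_iff.mp (hs.sdiff (t := {x})).isClosed.isOpen_compl x (by simp)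
  refine ⟨r, hr, fun y hy hyx => ?_⟩
  by_contra! hlt
  exact (mem_compl_iff _ _).mp (hball (Metric.mem_ball.mpr hlt)) ⟨hy, hyx⟩

theorem sub_mem_sub_inter_Icc_of_mem_stabilizer {Λ : Set ℝ} {t : ℝ} (ht : 0 < t)
    (hper : t ∈ AddAction.stabilizer ℝ Λ) {p q : ℝ} (hp : p ∈ Λ) (hq : q ∈ Λ)
    (hpq : |p - q| ≤ 1) :
    p - q ∈ (Λ ∩ Icc (-1) (t + 1)) - (Λ ∩ Icc (-1) (t + 1)) := by
  set g : ℝ := -(toIcoDiv ht 0 p • t)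
  have hg : g ∈ AddAction.stabilizer ℝ Λ := neg_mem (zsmul_mem hper _)
  have hgp : g + p ∈ Ico 0 t := by
    rw [show g + p = toIcoMod ht 0 p by rw [← self_sub_toIcoDiv_zsmul, neg_add_eq_sub]]
    simpa using toIcoMod_mem_Ico ht 0 p
  obtain ⟨hgp₀, hgpt⟩ := hgp
  obtain ⟨hpq₁, hpq₂⟩ := abs_le.mp hpq
  refine ⟨g + p, ⟨(AddAction.mem_stabilizer_set.mp hg p).mpr hp, ?_, ?_⟩,
    g + q, ⟨(AddAction.mem_stabilizer_set.mp hg q).mpr hq, ?_, ?_⟩, by ring⟩ <;> linarith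

theorem exists_pos_le_abs_sub_of_mem_stabilizer {Λ : Set ℝ}
    (hlf : ∀ K : Set ℝ, IsCompact K → (Λ ∩ K).Finite) {t : ℝ} (ht : t ≠ 0)
    (hper : t ∈ AddAction.stabilizer ℝ Λ) :
    ∃ r > 0, ∀ p ∈ Λ, ∀ q ∈ Λ, p ≠ q → r ≤ |p - q| := by
  have hwindow := hlf (Icc (-1) (|t| + 1)) isCompact_Icc
  obtain ⟨r, hr, hsep⟩ := (hwindow.sub hwindow).exists_pos_forall_le_dist 0
  refine ⟨min r 1, lt_min hr one_pos, fun p hp q hq hpq => ?_⟩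
  rcases le_total 1 |p - q| with hfar | hnear
  · exact (min_le_right _ _).trans hfar
  · have hmem := sub_mem_sub_inter_Icc_of_mem_stabilizer (abs_pos.mpr ht)
      (abs_mem_iff.mpr hper) hp hq hnear
    calc min r 1 ≤ r := min_le_left _ _
      _ ≤ dist (p - q) 0 := hsep _ hmem (sub_ne_zero.mpr hpq)
      _ = |p - q| := Real.dist_0_eq_abs _

/-- A locally finite subset of `ℝ` that is reflection symmetric in two distinct
points is uniformly discrete. -/
theorem locallyFinite_two_reflection_centres_uniformly_discrete
    (Λ : Set ℝ)
    (hlf : ∀ K : Set ℝ, IsCompact K → (Λ ∩ K).Finite)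
    (x y : ℝ) (hxy : x ≠ y)
    (hx : (fun w => 2 * x - w) '' Λ = Λ)
    (hy : (fun w => 2 * y - w) '' Λ = Λ) :
    ∃ r > 0, ∀ p ∈ Λ, ∀ q ∈ Λ, p ≠ q → r ≤ |p - q| := by
  have hper : 2 * y - 2 * x ∈ AddAction.stabilizer ℝ Λ :=
    AddAction.mem_stabilizer_iff.mpr (vadd_set_eq_self_of_image_sub_eq_self hx hy)
  have hne : 2 * y - 2 * x ≠ 0 := fun h => hxy (by linarith)
  exact exists_pos_le_abs_sub_of_mem_stabilizer hlf hne hper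
end

section
/- Let Λ ⊆ ℝ be a nonempty locally finite set symmetric under reflection in two distinct points, and let x', y' be two distinct reflection centres of Λ at minimal distance. Then per(Λ) = 2|x' − y'|·ℤ. -/
/-!
Composing the reflections in `x'` and `y'` gives the translation by `2 (x' - y')`, and composing
the reflection in `x'` with a translation by a period `t` gives the reflection in `x' + t / 2`.
By minimality of `|x' - y'|`, `2 |x' - y'|` is therefore the least positive period, and the periods
form a subgroup of an archimedean group, so they are the integer multiples of it.
-/

open Pointwise

def IsReflectionCenter {R : Type*} [Ring R] (Λ : Set R) (x : R) : Prop :=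
  (fun w => 2 * x - w) '' Λ = Λ

theorem IsReflectionCenter.two_mul_sub_mem_stabilizer {R : Type*} [CommRing R] {Λ : Set R}
    {x y : R} (hx : IsReflectionCenter Λ x) (hy : IsReflectionCenter Λ y) :
    2 * (x - y) ∈ AddAction.stabilizer R Λ := by
  have hcomp : (2 * (x - y) + ·) = (fun w : R => 2 * x - w) ∘ (fun w => 2 * y - w) := by
    funext w; simp only [Function.comp_apply]; ring
  rw [AddAction.mem_stabilizer_iff, ← Set.image_vadd]
  change (2 * (x - y) + ·) '' Λ = Λ
  rw [hcomp, Set.image_comp, hy, hx]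

theorem IsReflectionCenter.add_half_of_mem_stabilizer {K : Type*} [Field K] [NeZero (2 : K)]
    {Λ : Set K} {x t : K} (hx : IsReflectionCenter Λ x) (ht : t ∈ AddAction.stabilizer K Λ) :
    IsReflectionCenter Λ (x + t / 2) := by
  have hcomp : (fun w : K => 2 * (x + t / 2) - w) = (t + ·) ∘ (fun w => 2 * x - w) := by
    funext w; simp only [Function.comp_apply]; field_simp; ring
  rw [AddAction.mem_stabilizer_iff, ← Set.image_vadd] at ht
  rw [IsReflectionCenter, hcomp, Set.image_comp, hx]
  exact ht

section LinearOrderedField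

variable {K : Type*} [Field K] [LinearOrder K] [IsStrictOrderedRing K] {Λ : Set K} {x y : K}

theorem IsReflectionCenter.two_mul_abs_sub_le_abs_of_mem_stabilizer (hx : IsReflectionCenter Λ x)
    (hmin : ∀ u v, IsReflectionCenter Λ u → IsReflectionCenter Λ v → u ≠ v → |x - y| ≤ |u - v|)
    {t : K} (ht : t ∈ AddAction.stabilizer K Λ) (ht0 : t ≠ 0) : 2 * |x - y| ≤ |t| := by
  have h := hmin x (x + t / 2) hx (hx.add_half_of_mem_stabilizer ht) (by simpa using ht0)
  rw [sub_add_cancel_left, abs_neg, abs_div, abs_two] at h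
  linarith

theorem IsReflectionCenter.stabilizer_eq_zmultiples [Archimedean K]
    (hx : IsReflectionCenter Λ x) (hy : IsReflectionCenter Λ y) (hxy : x ≠ y)
    (hmin : ∀ u v, IsReflectionCenter Λ u → IsReflectionCenter Λ v → u ≠ v → |x - y| ≤ |u - v|) :
    AddAction.stabilizer K Λ = AddSubgroup.zmultiples (2 * |x - y|) := by
  have hmem : 2 * |x - y| ∈ AddAction.stabilizer K Λ := by
    rw [← abs_two, ← abs_mul, abs_mem_iff]
    exact hx.two_mul_sub_mem_stabilizer hy
  have hpos : 0 < 2 * |x - y| := by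
    have := abs_pos.mpr (sub_ne_zero.mpr hxy)
    positivity
  rw [AddSubgroup.zmultiples_eq_closure]
  refine AddSubgroup.cyclic_of_min ⟨⟨hmem, hpos⟩, fun t ⟨ht, htpos⟩ => ?_⟩
  simpa [abs_of_pos htpos] using
    hx.two_mul_abs_sub_le_abs_of_mem_stabilizer hmin ht htpos.ne'

end LinearOrderedField

theorem periods_of_doubly_reflection_symmetric_set_general
    (Λ : Set ℝ)
    (x' y' : ℝ) (hxy : x' ≠ y')
    (hx : (fun w => 2 * x' - w) '' Λ = Λ)
    (hy : (fun w => 2 * y' - w) '' Λ = Λ)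
    (hmin : ∀ u v : ℝ, (fun w => 2 * u - w) '' Λ = Λ →
      (fun w => 2 * v - w) '' Λ = Λ → u ≠ v → |x' - y'| ≤ |u - v|) :
    {t : ℝ | t +ᵥ Λ = Λ} = {t : ℝ | ∃ n : ℤ, t = n * (2 * |x' - y'|)} := by
  have hstab := IsReflectionCenter.stabilizer_eq_zmultiples hx hy hxy hmin
  ext t
  rw [Set.mem_ofPred_eq, ← AddAction.mem_stabilizer_iff, hstab, AddSubgroup.mem_zmultiples_iff]
  simp only [zsmul_eq_mul, eq_comm, Set.mem_ofPred_eq]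

/-- Let `Λ ⊆ ℝ` be a nonempty locally finite set symmetric under reflection in two
distinct points, and let `x'`, `y'` be two distinct reflection centres at minimal
distance.  Then `per(Λ) = 2|x' - y'| ℤ`. -/
theorem periods_of_doubly_reflection_symmetric_set
    (Λ : Set ℝ) (hne : Λ.Nonempty)
    (hlf : ∀ K : Set ℝ, IsCompact K → (Λ ∩ K).Finite)
    (x' y' : ℝ) (hxy : x' ≠ y')
    (hx : (fun w => 2 * x' - w) '' Λ = Λ)
    (hy : (fun w => 2 * y' - w) '' Λ = Λ)
    (hmin : ∀ u v : ℝ, (fun w => 2 * u - w) '' Λ = Λ →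
      (fun w => 2 * v - w) '' Λ = Λ → u ≠ v → |x' - y'| ≤ |u - v|) :
    {t : ℝ | t +ᵥ Λ = Λ} = {t : ℝ | ∃ n : ℤ, t = n * (2 * |x' - y'|)} :=
  periods_of_doubly_reflection_symmetric_set_general Λ x' y' hxy hx hy hmin
end

section
/- If z and z' are distinct fivefold rotation centres of a set Λ ⊆ ℂ, then for each ℓ ∈ {0,…,4}, the points z + ξ^ℓ(z' − z) and z' + ξ^ℓ(z − z') are also fivefold rotation centres of Λ, where ξ = e^{2πi/5}. -/
open Set

private lemma centre_iff' (Λ : Set ℂ) (ξ w : ℂ) :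
    (fun v => ξ * v) '' ((fun x => x - w) '' Λ) = (fun x => x - w) '' Λ ↔
    (fun x => ξ * (x - w) + w) '' Λ = Λ := by
  constructor
  · intro h
    have := congrArg (fun S => (fun x : ℂ => x + w) '' S) h
    simpa [← image_comp, Function.comp] using this
  · intro h
    have := congrArg (fun S => (fun x : ℂ => x - w) '' S) h
    simpa [← image_comp, Function.comp] using this

private lemma rot_image' (Λ : Set ℂ) (ξ z : ℂ)
    (hz : (fun x => ξ * (x - z) + z) '' Λ = Λ) (ℓ : ℕ) :
    (fun x => ξ ^ ℓ * (x - z) + z) '' Λ = Λ := by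
  induction ℓ with
  | zero => simp
  | succ n ih =>
    have h : (fun x : ℂ => ξ ^ (n + 1) * (x - z) + z) =
        (fun x : ℂ => ξ * (x - z) + z) ∘ (fun x : ℂ => ξ ^ n * (x - z) + z) := by
      funext x; simp only [Function.comp]; ring
    rw [h, image_comp, ih, hz]

private lemma conj_centre (Λ : Set ℂ) (ξ z z' : ℂ)
    (hz : (fun x => ξ * (x - z) + z) '' Λ = Λ)
    (hz' : (fun x => ξ * (x - z') + z') '' Λ = Λ) (ℓ : ℕ) :
    (fun x => ξ * (x - (z + ξ ^ ℓ * (z' - z))) + (z + ξ ^ ℓ * (z' - z))) '' Λ = Λ := by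
  have hT : (fun x : ℂ => ξ ^ ℓ * (x - z) + z) '' Λ = Λ := rot_image' Λ ξ z hz ℓ
  set w : ℂ := z + ξ ^ ℓ * (z' - z) with hw
  calc (fun x => ξ * (x - w) + w) '' Λ
      = (fun x => ξ * (x - w) + w) '' ((fun x : ℂ => ξ ^ ℓ * (x - z) + z) '' Λ) := by rw [hT]
    _ = (fun x : ℂ => ξ ^ ℓ * (x - z) + z) '' ((fun x => ξ * (x - z') + z') '' Λ) := by
        rw [← image_comp, ← image_comp]
        have hfun : ((fun x => ξ * (x - w) + w) ∘ fun x : ℂ => ξ ^ ℓ * (x - z) + z) =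
            ((fun x : ℂ => ξ ^ ℓ * (x - z) + z) ∘ fun x => ξ * (x - z') + z') := by
          funext x
          simp only [Function.comp, hw]
          ring
        rw [hfun]
    _ = Λ := by rw [hz', hT]

/-- If `z` and `z'` are distinct fivefold rotation centres of `Λ ⊆ ℂ`, then for
each `ℓ ∈ {0, …, 4}` the points `z + ξ^ℓ (z' - z)` and `z' + ξ^ℓ (z - z')` are
also fivefold rotation centres of `Λ`, where `ξ = e^{2πi/5}`. -/
theorem fivefold_centres_propagate
    (Λ : Set ℂ) (z z' : ℂ) (hzz : z ≠ z')
    (hz : (fun w => Complex.exp (2 * Real.pi * Complex.I / 5) * w) ''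
        ((fun w => w - z) '' Λ) = (fun w => w - z) '' Λ)
    (hz' : (fun w => Complex.exp (2 * Real.pi * Complex.I / 5) * w) ''
        ((fun w => w - z') '' Λ) = (fun w => w - z') '' Λ) :
    ∀ ℓ : ℕ, ℓ ≤ 4 →
      ((fun w => Complex.exp (2 * Real.pi * Complex.I / 5) * w) ''
          ((fun w => w - (z + Complex.exp (2 * Real.pi * Complex.I / 5) ^ ℓ * (z' - z))) '' Λ) =
        (fun w => w - (z + Complex.exp (2 * Real.pi * Complex.I / 5) ^ ℓ * (z' - z))) '' Λ) ∧
      ((fun w => Complex.exp (2 * Real.pi * Complex.I / 5) * w) ''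
          ((fun w => w - (z' + Complex.exp (2 * Real.pi * Complex.I / 5) ^ ℓ * (z - z'))) '' Λ) =
        (fun w => w - (z' + Complex.exp (2 * Real.pi * Complex.I / 5) ^ ℓ * (z - z'))) '' Λ) := by
  set ξ : ℂ := Complex.exp (2 * Real.pi * Complex.I / 5) with hξ
  rw [centre_iff'] at hz hz'
  intro ℓ _
  constructor
  · rw [centre_iff']
    exact conj_centre Λ ξ z z' hz hz' ℓ
  · rw [centre_iff']
    exact conj_centre Λ ξ z' z hz' hz ℓ
end

section
/- If Λ and Λ' ⊆ ℝ^d are locally indistinguishable and R ∈ O(d) is a linear isometry such that RΛ is LI with Λ, then RΛ' is LI with Λ'. Hence LI symmetry is a property of the entire LI class. -/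
open Pointwise

/-- Local indistinguishability. -/
def LI {d : ℕ} (Λ Λ' : Set (EuclideanSpace ℝ (Fin d))) : Prop :=
  (∀ K : Set (EuclideanSpace ℝ (Fin d)), IsCompact K →
    ∃ t : EuclideanSpace ℝ (Fin d), (t +ᵥ Λ) ∩ K = Λ' ∩ K) ∧
  (∀ K' : Set (EuclideanSpace ℝ (Fin d)), IsCompact K' →
    ∃ t' : EuclideanSpace ℝ (Fin d), (t' +ᵥ Λ') ∩ K' = Λ ∩ K')



/-- One half of local indistinguishability. -/
def LIhalf {d : ℕ} (A B : Set (EuclideanSpace ℝ (Fin d))) : Prop :=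
  ∀ K : Set (EuclideanSpace ℝ (Fin d)), IsCompact K →
    ∃ t : EuclideanSpace ℝ (Fin d), (t +ᵥ A) ∩ K = B ∩ K

lemma LIhalf_trans {d : ℕ} {A B C : Set (EuclideanSpace ℝ (Fin d))}
    (h1 : LIhalf A B) (h2 : LIhalf B C) : LIhalf A C := by
  intro K hK
  obtain ⟨s, hs⟩ := h2 K hK
  have hK' : IsCompact ((-s) +ᵥ K) := by
    rw [← Set.image_vadd]
    exact hK.image (continuous_const_vadd (-s))
  obtain ⟨t, ht⟩ := h1 ((-s) +ᵥ K) hK'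
  refine ⟨s + t, ?_⟩
  have := congrArg (fun S => s +ᵥ S) ht
  simpa [Set.vadd_set_inter, vadd_vadd, ← hs] using this

lemma LIhalf_image {d : ℕ} {A B : Set (EuclideanSpace ℝ (Fin d))}
    (R : EuclideanSpace ℝ (Fin d) ≃ₗᵢ[ℝ] EuclideanSpace ℝ (Fin d))
    (h : LIhalf A B) :
    LIhalf ((R : EuclideanSpace ℝ (Fin d) → EuclideanSpace ℝ (Fin d)) '' A)
      ((R : EuclideanSpace ℝ (Fin d) → EuclideanSpace ℝ (Fin d)) '' B) := by
  intro K hK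
  have hK' : IsCompact ((R.symm : EuclideanSpace ℝ (Fin d) → EuclideanSpace ℝ (Fin d)) '' K) :=
    hK.image R.symm.continuous
  obtain ⟨t, ht⟩ := h _ hK'
  refine ⟨R t, ?_⟩
  have := congrArg (fun S => (R : EuclideanSpace ℝ (Fin d) → EuclideanSpace ℝ (Fin d)) '' S) ht
  have hRK : (R : EuclideanSpace ℝ (Fin d) → EuclideanSpace ℝ (Fin d)) ''
      ((R.symm : EuclideanSpace ℝ (Fin d) → EuclideanSpace ℝ (Fin d)) '' K) = K := by
    ext x; simp
  have hvadd : ∀ (v : EuclideanSpace ℝ (Fin d)) (S : Set (EuclideanSpace ℝ (Fin d))),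
      (R : EuclideanSpace ℝ (Fin d) → EuclideanSpace ℝ (Fin d)) '' (v +ᵥ S)
        = R v +ᵥ (R : EuclideanSpace ℝ (Fin d) → EuclideanSpace ℝ (Fin d)) '' S := by
    intro v S
    ext x
    simp only [Set.mem_vadd_set, Set.mem_image]
    constructor
    · rintro ⟨y, ⟨z, hz, rfl⟩, rfl⟩
      exact ⟨R z, ⟨z, hz, rfl⟩, by simp [vadd_eq_add, map_add]⟩
    · rintro ⟨y, ⟨z, hz, rfl⟩, rfl⟩
      exact ⟨v + z, ⟨z, hz, rfl⟩, by simp [vadd_eq_add, map_add]⟩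
  simp only [Set.image_inter R.injective, hRK, hvadd] at this
  exact this

/-- If `Λ` and `Λ'` are locally indistinguishable and the linear isometry `R`
is an LI symmetry of `Λ` (i.e. `RΛ` is LI with `Λ`), then `RΛ'` is LI with `Λ'`:
LI symmetry is a property of the entire LI class. -/
theorem LI_symmetry_is_class_property (d : ℕ)
    (Λ Λ' : Set (EuclideanSpace ℝ (Fin d)))
    (R : EuclideanSpace ℝ (Fin d) ≃ₗᵢ[ℝ] EuclideanSpace ℝ (Fin d))
    (hLI : LI Λ Λ') (hR : LI ((R : EuclideanSpace ℝ (Fin d) → EuclideanSpace ℝ (Fin d)) '' Λ) Λ) :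
    LI ((R : EuclideanSpace ℝ (Fin d) → EuclideanSpace ℝ (Fin d)) '' Λ') Λ' := by
  constructor
  · exact LIhalf_trans (LIhalf_trans (LIhalf_image R hLI.2) hR.1) hLI.1
  · exact LIhalf_trans (LIhalf_trans hLI.2 hR.2) (LIhalf_image R hLI.1)
end
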